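/- arXiv:1009.2529 — 3 statements merged into one kernel-verified Lean document; each statement's English description precedes it below -/
import Mathlib

section
/- Let S(t,s) : X_s → X_t be a continuous process on a family of Banach spaces possessing a pullback absorber 𝔅 such that for every t, the Kuratowski measure α_t(S(t,s)𝔅(s)) → 0 as s → −∞. Then the time-dependent ω-limit family ω_𝔅(t) = ⋂_{τ≤t} cl(⋃_{s≤τ} S(t,s)𝔅(s)) is, for each t, a nonempty compact subset of X_t, is invariant (S(t,s)ω_𝔅(s) = ω_𝔅(t) for s ≤ t), and pullback attracts every pullback-bounded family. -/
/-- The Kuratowski measure of noncompactness of a subset `D` of a Banach space. -/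
noncomputable def kuratowski {X : Type*} [NormedAddCommGroup X] (D : Set X) : ℝ :=
  sInf {d : ℝ | 0 < d ∧ ∃ F : Finset X, D ⊆ ⋃ x ∈ F, Metric.ball x d}

/-- A family `B(t) ⊆ X t` is pullback-bounded if `sup_{s ≤ t} ‖B(s)‖ < ∞` for every `t`. -/
def PullbackBounded {X : ℝ → Type*} [∀ t, NormedAddCommGroup (X t)]
    (B : ∀ t, Set (X t)) : Prop :=
  ∀ t : ℝ, ∃ R : ℝ, ∀ s ≤ t, ∀ z ∈ B s, ‖z‖ ≤ R

/-- A (continuous) process on the family of spaces `X t`. -/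
def IsProcess {X : ℝ → Type*} [∀ t, NormedAddCommGroup (X t)]
    (S : ∀ t s : ℝ, X s → X t) : Prop :=
  (∀ t : ℝ, S t t = id) ∧
  (∀ t s : ℝ, s ≤ t → Continuous (S t s)) ∧
  (∀ τ t s : ℝ, s ≤ t → t ≤ τ → ∀ z : X s, S τ t (S t s z) = S τ s z)

/-- A pullback-bounded family `𝔅` is a pullback absorber if every pullback-bounded
family eventually (in the pullback sense) enters `𝔅`. -/
def IsAbsorber {X : ℝ → Type*} [∀ t, NormedAddCommGroup (X t)]
    (S : ∀ t s : ℝ, X s → X t) (𝔅 : ∀ t, Set (X t)) : Prop :=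
  PullbackBounded 𝔅 ∧
  ∀ B : ∀ t, Set (X t), PullbackBounded B → ∀ t : ℝ, ∃ t0 ≤ t,
    ∀ s ≤ t0, S t s '' B s ⊆ 𝔅 t

/-- `A` pullback attracts every pullback-bounded family. -/
def PullbackAttracts {X : ℝ → Type*} [∀ t, NormedAddCommGroup (X t)]
    (S : ∀ t s : ℝ, X s → X t) (A : ∀ t, Set (X t)) : Prop :=
  ∀ B : ∀ t, Set (X t), PullbackBounded B → ∀ t : ℝ, ∀ ε > (0:ℝ), ∃ s0 ≤ t,
    ∀ s ≤ s0, ∀ z ∈ B s, ∃ a ∈ A t, ‖S t s z - a‖ < ε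

/-- The time-dependent `ω`-limit of the family `𝔅`. -/
def timeOmegaLimit {X : ℝ → Type*} [∀ t, NormedAddCommGroup (X t)]
    (S : ∀ t s : ℝ, X s → X t) (𝔅 : ∀ t, Set (X t)) (t : ℝ) : Set (X t) :=
  ⋂ τ ∈ Set.Iic t, closure (⋃ s ∈ Set.Iic τ, S t s '' 𝔅 s)

/-!
The ω-limit `ω_𝔅(t)` is the set of cluster points, as `τ → -∞`, of the tails
`U_t(τ) = ⋃_{s ≤ τ} S(t,s)𝔅(s)`. Pushing a tail through the absorber,
`U_t(τ₀) ⊆ S(t,r)𝔅(r)` for `τ₀ ≪ r`, so `α_t(S(t,r)𝔅(r)) → 0` says the tails have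
arbitrarily fine finite nets. In a complete space this makes every sequence taken
from ever later tails relatively compact, with its limit points in `ω_𝔅(t)`; nonemptiness,
compactness, invariance (via continuity of `S(t,s)` and `U_t(τ) = S(t,s) U_s(τ)`) and
attraction (by contradiction) all follow from this extraction.
-/

open Filter Metric Set Topology

section Tails

variable {E : Type*} [PseudoMetricSpace E]

/-- For monotone `U`, the finite-net form of `α(U τ) → 0` as `τ → -∞`. -/
def TailsTotallyBounded (U : ℝ → Set E) : Prop :=
  ∀ ε > 0, ∃ τ, ∃ F : Set E, F.Finite ∧ U τ ⊆ ⋃ y ∈ F, ball y ε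

lemma exists_seq_tendsto_of_forall_mem_closure {A : ℕ → Set E} {y : E}
    (hy : ∀ n, y ∈ closure (A n)) :
    ∃ x : ℕ → E, (∀ n, x n ∈ A n) ∧ Tendsto x atTop (𝓝 y) := by
  have hclose : ∀ n : ℕ, ∃ x ∈ A n, dist x y < 1 / ((n : ℝ) + 1) := fun n => by
    obtain ⟨x, hx, hxy⟩ := mem_closure_iff.1 (hy n) _ Nat.one_div_pos_of_nat
    exact ⟨x, hx, by rwa [dist_comm]⟩
  choose x hxA hxy using hclose
  refine ⟨x, hxA, tendsto_iff_dist_tendsto_zero.2 ?_⟩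
  exact squeeze_zero (fun _ => dist_nonneg) (fun n => (hxy n).le)
    tendsto_one_div_add_atTop_nhds_zero_nat

variable {U : ℝ → Set E}

lemma TailsTotallyBounded.totallyBounded_range (hsmall : TailsTotallyBounded U)
    (hU : Monotone U) {τ : ℕ → ℝ} (hτ : Tendsto τ atTop atBot) {x : ℕ → E}
    (hx : ∀ n, x n ∈ U (τ n)) : TotallyBounded (range x) := by
  refine totallyBounded_iff.2 fun ε hε => ?_
  obtain ⟨τ₀, F, hF, hcover⟩ := hsmall ε hε
  obtain ⟨N, hN⟩ := tendsto_atTop_atBot.1 hτ τ₀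
  refine ⟨F ∪ x '' Iio N, hF.union ((finite_Iio N).image x), ?_⟩
  rintro _ ⟨n, rfl⟩
  rcases lt_or_ge n N with hn | hn
  · exact mem_biUnion (Or.inr (mem_image_of_mem x hn)) (mem_ball_self hε)
  · obtain ⟨y, hy, hxy⟩ := mem_iUnion₂.1 (hcover (hU (hN n hn) (hx n)))
    exact mem_biUnion (Or.inl hy) hxy

lemma TailsTotallyBounded.exists_subseq_tendsto [CompleteSpace E]
    (hsmall : TailsTotallyBounded U) (hU : Monotone U) {τ : ℕ → ℝ}
    (hτ : Tendsto τ atTop atBot) {x : ℕ → E} (hx : ∀ n, x n ∈ U (τ n)) :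
    ∃ y ∈ ⋂ σ, closure (U σ), ∃ φ : ℕ → ℕ, StrictMono φ ∧
      Tendsto (x ∘ φ) atTop (𝓝 y) := by
  have hcompact : IsCompact (closure (range x)) :=
    (hsmall.totallyBounded_range hU hτ hx).closure.isCompact_of_isClosed isClosed_closure
  obtain ⟨y, -, φ, hφ, hlim⟩ :=
    hcompact.tendsto_subseq fun n => subset_closure (mem_range_self n)
  refine ⟨y, mem_iInter.2 fun σ => mem_closure_of_tendsto hlim ?_, φ, hφ, hlim⟩
  filter_upwards [(hτ.comp hφ.tendsto_atTop).eventually_le_atBot σ] with n hn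
  exact hU hn (hx (φ n))

lemma TailsTotallyBounded.iInter_closure_nonempty [CompleteSpace E]
    (hsmall : TailsTotallyBounded U) (hU : Monotone U) (hne : ∀ τ, (U τ).Nonempty) :
    (⋂ σ, closure (U σ)).Nonempty := by
  choose x hx using fun n : ℕ => hne (-n)
  obtain ⟨y, hy, -⟩ := hsmall.exists_subseq_tendsto hU
    (tendsto_neg_atTop_atBot.comp tendsto_natCast_atTop_atTop) hx
  exact ⟨y, hy⟩

lemma TailsTotallyBounded.isCompact_iInter_closure [CompleteSpace E]
    (hsmall : TailsTotallyBounded U) : IsCompact (⋂ σ, closure (U σ)) := by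
  refine TotallyBounded.isCompact_of_isClosed ?_ (isClosed_iInter fun _ => isClosed_closure)
  refine totallyBounded_iff.2 fun ε hε => ?_
  obtain ⟨τ, F, hF, hcover⟩ := hsmall (ε / 2) (half_pos hε)
  refine ⟨F, hF, fun y hy => ?_⟩
  rw [← thickening_eq_biUnion_ball] at hcover ⊢
  exact cthickening_subset_thickening' hε (half_lt_self hε) F
    (closure_thickening_subset_cthickening _ F (closure_mono hcover (mem_iInter.1 hy τ)))

lemma TailsTotallyBounded.exists_subset_thickening_iInter_closure [CompleteSpace E]
    (hsmall : TailsTotallyBounded U) (hU : Monotone U) {ε : ℝ} (hε : 0 < ε) :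
    ∃ τ, U τ ⊆ thickening ε (⋂ σ, closure (U σ)) := by
  by_contra! hfar
  choose x hxU hxfar using fun n : ℕ => not_subset.1 (hfar (-n))
  obtain ⟨y, hy, φ, -, hlim⟩ := hsmall.exists_subseq_tendsto hU
    (tendsto_neg_atTop_atBot.comp tendsto_natCast_atTop_atTop) hxU
  obtain ⟨n, hn⟩ := ((tendsto_iff_dist_tendsto_zero.1 hlim).eventually_lt_const hε).exists
  exact hxfar (φ n) (mem_thickening_iff.2 ⟨y, hy, hn⟩)

end Tails

lemma exists_finset_cover_of_kuratowski_lt {X : Type*} [NormedAddCommGroup X] {D : Set X}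
    (hD : Bornology.IsBounded D) {ε : ℝ} (hε : kuratowski D < ε) :
    ∃ F : Finset X, D ⊆ ⋃ x ∈ F, ball x ε := by
  -- boundedness makes the set under `sInf` nonempty; otherwise `kuratowski D = sInf ∅ = 0`
  obtain ⟨r, hr⟩ := hD.subset_ball 0
  have hne : (max r 1) ∈ {d : ℝ | 0 < d ∧ ∃ F : Finset X, D ⊆ ⋃ x ∈ F, ball x d} :=
    ⟨lt_of_lt_of_le one_pos (le_max_right r 1),
      {0}, fun z hz => by simpa using ball_subset_ball (le_max_left r 1) (hr hz)⟩
  obtain ⟨d, ⟨-, F, hF⟩, hdε⟩ := exists_lt_of_csInf_lt ⟨_, hne⟩ hε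
  exact ⟨F, hF.trans (iUnion₂_mono fun x _ => ball_subset_ball hdε.le)⟩

section PullbackDynamics

variable {X : ℝ → Type*} {S : ∀ t s : ℝ, X s → X t} {𝔅 : ∀ t, Set (X t)}

variable (S 𝔅) in
def orbitTail (t τ : ℝ) : Set (X t) := ⋃ s ∈ Iic τ, S t s '' 𝔅 s

lemma orbitTail_mono (t : ℝ) : Monotone (orbitTail S 𝔅 t) :=
  fun _ _ h => biUnion_subset_biUnion_left (Iic_subset_Iic.2 h)

variable [∀ t, NormedAddCommGroup (X t)]

lemma timeOmegaLimit_eq_iInter_closure (t : ℝ) :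
    timeOmegaLimit S 𝔅 t = ⋂ τ, closure (orbitTail S 𝔅 t τ) := by
  ext y
  simp only [timeOmegaLimit, mem_iInter, mem_Iic]
  exact ⟨fun hy τ => closure_mono (orbitTail_mono t (min_le_left τ t))
    (hy _ (min_le_right τ t)), fun hy τ _ => hy τ⟩

lemma IsProcess.orbitTail_eq_image (hS : IsProcess S) {τ s t : ℝ} (hτs : τ ≤ s)
    (hst : s ≤ t) : orbitTail S 𝔅 t τ = S t s '' orbitTail S 𝔅 s τ := by
  simp only [orbitTail, image_iUnion₂, image_image]
  refine iUnion₂_congr fun r hr => image_congr fun z _ => ?_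
  exact (hS.2.2 t s r (le_trans hr hτs) hst z).symm

lemma PullbackBounded.isBounded {B : ∀ t, Set (X t)} (hB : PullbackBounded B) (t : ℝ) :
    Bornology.IsBounded (B t) :=
  let ⟨R, hR⟩ := hB t
  isBounded_iff_forall_norm_le.2 ⟨R, hR t le_rfl⟩

lemma IsAbsorber.nonempty (h𝔅 : IsAbsorber S 𝔅) (t : ℝ) : (𝔅 t).Nonempty := by
  obtain ⟨t₀, -, habs⟩ := h𝔅.2 (fun _ => {0})
    (fun _ => ⟨0, fun _ _ z hz => by rw [mem_singleton_iff.1 hz, norm_zero]⟩) t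
  exact ⟨_, habs t₀ le_rfl (mem_image_of_mem _ rfl)⟩

lemma IsAbsorber.orbitTail_nonempty (h𝔅 : IsAbsorber S 𝔅) (t τ : ℝ) :
    (orbitTail S 𝔅 t τ).Nonempty :=
  let ⟨z, hz⟩ := h𝔅.nonempty τ
  ⟨S t τ z, mem_biUnion (mem_Iic.2 le_rfl) (mem_image_of_mem _ hz)⟩

lemma IsAbsorber.exists_orbitTail_subset_image (hS : IsProcess S) (h𝔅 : IsAbsorber S 𝔅)
    {r t : ℝ} (hrt : r ≤ t) : ∃ τ ≤ r, orbitTail S 𝔅 t τ ⊆ S t r '' 𝔅 r := by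
  obtain ⟨τ, hτr, habs⟩ := h𝔅.2 𝔅 h𝔅.1 r
  refine ⟨τ, hτr, ?_⟩
  rw [hS.orbitTail_eq_image hτr hrt]
  exact image_mono (iUnion₂_subset habs)

lemma tailsTotallyBounded_orbitTail (hS : IsProcess S) (h𝔅 : IsAbsorber S 𝔅)
    (hα : ∀ t, Tendsto (fun s => kuratowski (S t s '' 𝔅 s)) atBot (𝓝 0)) (t : ℝ) :
    TailsTotallyBounded (orbitTail S 𝔅 t) := by
  intro ε hε
  obtain ⟨t₀, ht₀, habs⟩ := h𝔅.2 𝔅 h𝔅.1 t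
  obtain ⟨r, hrε, hrt₀⟩ :=
    ((hα t).eventually_lt_const hε |>.and (eventually_le_atBot t₀)).exists
  obtain ⟨F, hF⟩ :=
    exists_finset_cover_of_kuratowski_lt ((h𝔅.1.isBounded t).subset (habs r hrt₀)) hrε
  obtain ⟨τ, -, hτ⟩ := h𝔅.exists_orbitTail_subset_image hS (hrt₀.trans ht₀)
  exact ⟨τ, F, F.finite_toSet, hτ.trans hF⟩

lemma IsProcess.image_timeOmegaLimit_subset (hS : IsProcess S) {s t : ℝ} (hst : s ≤ t) :
    S t s '' timeOmegaLimit S 𝔅 s ⊆ timeOmegaLimit S 𝔅 t := by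
  simp only [timeOmegaLimit_eq_iInter_closure, image_subset_iff, subset_iInter_iff]
  intro τ x hx
  have hmin := hS.orbitTail_eq_image (𝔅 := 𝔅) (min_le_right τ s) hst
  refine closure_mono (hmin.symm.subset.trans (orbitTail_mono t (min_le_left τ s))) ?_
  exact image_closure_subset_closure_image (hS.2.1 t s hst)
    (mem_image_of_mem _ (mem_iInter.1 hx (min τ s)))

lemma IsProcess.timeOmegaLimit_subset_image {s t : ℝ} [CompleteSpace (X s)]
    (hS : IsProcess S) (hsmall : TailsTotallyBounded (orbitTail S 𝔅 s)) (hst : s ≤ t) :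
    timeOmegaLimit S 𝔅 t ⊆ S t s '' timeOmegaLimit S 𝔅 s := by
  intro y hy
  rw [timeOmegaLimit_eq_iInter_closure] at hy ⊢
  have hτ : Tendsto (fun n : ℕ => s - n) atTop atBot :=
    tendsto_atBot_add_const_left _ s (tendsto_neg_atTop_atBot.comp tendsto_natCast_atTop_atTop)
  have hclosure (n : ℕ) : y ∈ closure (S t s '' orbitTail S 𝔅 s (s - n)) := by
    rw [← hS.orbitTail_eq_image (by linarith [n.cast_nonneg (α := ℝ)]) hst]
    exact mem_iInter.1 hy _
  obtain ⟨_, himage, hlim⟩ := exists_seq_tendsto_of_forall_mem_closure hclosure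
  choose w hw hwy using himage
  obtain ⟨x, hx, φ, hφ, hwx⟩ := hsmall.exists_subseq_tendsto (orbitTail_mono s) hτ hw
  refine ⟨x, hx, tendsto_nhds_unique (((hS.2.1 t s hst).tendsto x).comp hwx) ?_⟩
  simpa only [Function.comp_def, hwy] using hlim.comp hφ.tendsto_atTop

lemma IsProcess.pullbackAttracts_timeOmegaLimit [∀ t, CompleteSpace (X t)]
    (hS : IsProcess S) (h𝔅 : IsAbsorber S 𝔅)
    (hsmall : ∀ t, TailsTotallyBounded (orbitTail S 𝔅 t)) :
    PullbackAttracts S (timeOmegaLimit S 𝔅) := by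
  intro B hB t ε hε
  obtain ⟨τ, hτ⟩ := (hsmall t).exists_subset_thickening_iInter_closure (orbitTail_mono t) hε
  obtain ⟨s₀, hs₀, habs⟩ := h𝔅.2 B hB (min τ t)
  refine ⟨s₀, hs₀.trans (min_le_right τ t), fun s hs z hz => ?_⟩
  have hmem : S t s z ∈ orbitTail S 𝔅 t τ := by
    rw [← hS.2.2 t (min τ t) s (hs.trans hs₀) (min_le_right τ t) z]
    exact mem_biUnion (min_le_left τ t) (mem_image_of_mem _ (habs s hs (mem_image_of_mem _ hz)))
  obtain ⟨a, ha, hdist⟩ := mem_thickening_iff.1 (hτ hmem)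
  exact ⟨a, by rwa [timeOmegaLimit_eq_iInter_closure], by rwa [← dist_eq_norm]⟩

end PullbackDynamics

theorem stmt_10_general {X : ℝ → Type*} [∀ t, NormedAddCommGroup (X t)]
    [∀ t, CompleteSpace (X t)]
    (S : ∀ t s : ℝ, X s → X t) (hS : IsProcess S)
    (𝔅 : ∀ t, Set (X t)) (h𝔅 : IsAbsorber S 𝔅)
    (hα : ∀ t : ℝ, Filter.Tendsto (fun s => kuratowski (S t s '' 𝔅 s))
      Filter.atBot (nhds 0)) :
    (∀ t, (timeOmegaLimit S 𝔅 t).Nonempty ∧ IsCompact (timeOmegaLimit S 𝔅 t)) ∧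
    (∀ s t : ℝ, s ≤ t → S t s '' timeOmegaLimit S 𝔅 s = timeOmegaLimit S 𝔅 t) ∧
    PullbackAttracts S (timeOmegaLimit S 𝔅) := by
  have hsmall := tailsTotallyBounded_orbitTail hS h𝔅 hα
  refine ⟨fun t => ?_, fun s t hst => ?_, hS.pullbackAttracts_timeOmegaLimit h𝔅 hsmall⟩
  · rw [timeOmegaLimit_eq_iInter_closure]
    exact ⟨(hsmall t).iInter_closure_nonempty (orbitTail_mono t) (h𝔅.orbitTail_nonempty t),
      (hsmall t).isCompact_iInter_closure⟩
  · exact (hS.image_timeOmegaLimit_subset hst).antisymm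
      (hS.timeOmegaLimit_subset_image (hsmall s) hst)

/-- Theorem 2.1: if the process possesses a pullback absorber `𝔅`
with `α_t(S(t,s)𝔅(s)) → 0` as `s → -∞`, then `ω_𝔅` is a time-dependent global
attractor: nonempty compact, invariant, and pullback attracting. -/
theorem stmt_10 {X : ℝ → Type*} [∀ t, NormedAddCommGroup (X t)]
    [∀ t, NormedSpace ℝ (X t)] [∀ t, CompleteSpace (X t)]
    (S : ∀ t s : ℝ, X s → X t) (hS : IsProcess S)
    (𝔅 : ∀ t, Set (X t)) (h𝔅 : IsAbsorber S 𝔅)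
    (hα : ∀ t : ℝ, Filter.Tendsto (fun s => kuratowski (S t s '' 𝔅 s))
      Filter.atBot (nhds 0)) :
    (∀ t, (timeOmegaLimit S 𝔅 t).Nonempty ∧ IsCompact (timeOmegaLimit S 𝔅 t)) ∧
    (∀ s t : ℝ, s ≤ t → S t s '' timeOmegaLimit S 𝔅 s = timeOmegaLimit S 𝔅 t) ∧
    PullbackAttracts S (timeOmegaLimit S 𝔅) :=
  stmt_10_general S hS 𝔅 h𝔅 hα
end

section
/- Under the hypotheses of the decomposition criterion (S(t,s)𝔅(s) = P(t,s) + N(t,s), with ‖P(t,s)‖_{X_t} → 0 as s → −∞ and N(t,s) compact), suppose additionally there are Banach spaces Y_t compactly embedded in X_t with equibounded injections on (−∞,t], and closed balls of Y_t closed in X_t, and sup_{s ≤ t} ‖N(t,s)‖_{Y_t} = h(t) < ∞ for each t. Then the global attractor A satisfies ‖A(t)‖_{Y_t} ≤ h(t) for all t, and A is a pullback-bounded family (hence unique among pullback-bounded time-dependent global attractors). -/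
open Metric Set

lemma add_mem_cthickening {E : Type*} [SeminormedAddCommGroup E] {K : Set E} {p n : E}
    {ε : ℝ} (hp : ‖p‖ ≤ ε) (hn : n ∈ K) : p + n ∈ cthickening ε K :=
  mem_cthickening_of_dist_le _ n ε K hn (by simpa [dist_eq_norm] using hp)

section OmegaLimit

variable {X : ℝ → Type*} [∀ t, NormedAddCommGroup (X t)]

lemma timeOmegaLimit_subset_closure_iUnion (S : ∀ t s : ℝ, X s → X t)
    (𝔅 : ∀ t, Set (X t)) {t τ : ℝ} (hτ : τ ≤ t) :
    timeOmegaLimit S 𝔅 t ⊆ closure (⋃ s ∈ Iic τ, S t s '' 𝔅 s) :=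
  biInter_subset_of_mem (mem_Iic.mpr hτ)

lemma timeOmegaLimit_subset_of_eventually_subset_cthickening
    (S : ∀ t s : ℝ, X s → X t) (𝔅 : ∀ t, Set (X t)) {t : ℝ} {K : Set (X t)}
    (hK : IsClosed K)
    (hnear : ∀ ε > (0 : ℝ), ∃ τ ≤ t, ∀ s ≤ τ, S t s '' 𝔅 s ⊆ cthickening ε K) :
    timeOmegaLimit S 𝔅 t ⊆ K := by
  intro x hx
  rw [← hK.closure_eq, closure_eq_iInter_cthickening]
  refine mem_iInter₂.mpr fun ε hε => ?_
  obtain ⟨τ, hτt, hτ⟩ := hnear ε hε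
  have hunion : (⋃ s ∈ Iic τ, S t s '' 𝔅 s) ⊆ cthickening ε K :=
    iUnion₂_subset fun s hs => hτ s hs
  exact isClosed_cthickening.closure_subset_iff.mpr hunion
    (timeOmegaLimit_subset_closure_iUnion S 𝔅 hτt hx)

end OmegaLimit

lemma pullbackBounded_of_subset_image_closedBall {X Y : ℝ → Type*}
    [∀ t, NormedAddCommGroup (X t)] [∀ t, SeminormedAddCommGroup (Y t)]
    {A : ∀ t, Set (X t)} (j : ∀ t, Y t → X t) {h : ℝ → ℝ} (hmono : Monotone h)
    (hA : ∀ t, A t ⊆ j t '' closedBall 0 (h t))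
    (heq : ∀ t : ℝ, ∃ C : ℝ, ∀ s ≤ t, ∀ y : Y s, ‖j s y‖ ≤ C * ‖y‖) :
    PullbackBounded A := by
  intro t
  obtain ⟨C, hC⟩ := heq t
  refine ⟨|C| * |h t|, fun s hs z hz => ?_⟩
  obtain ⟨y, hy, rfl⟩ := hA s hz
  have hy_le : ‖y‖ ≤ |h t| := (mem_closedBall_zero_iff.mp hy).trans
    ((hmono hs).trans (le_abs_self _))
  calc ‖j s y‖ ≤ C * ‖y‖ := hC s hs y
    _ ≤ |C| * ‖y‖ := by gcongr; exact le_abs_self C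
    _ ≤ |C| * |h t| := by gcongr

theorem stmt_12_general {X Y : ℝ → Type*} [∀ t, NormedAddCommGroup (X t)]
    [∀ t, NormedSpace ℝ (X t)]
    [∀ t, NormedAddCommGroup (Y t)] [∀ t, NormedSpace ℝ (Y t)]
    (S : ∀ t s : ℝ, X s → X t)
    (𝔅 : ∀ t, Set (X t))
    (j : ∀ t : ℝ, Y t →L[ℝ] X t)
    -- equibounded injections on (-∞, t]
    (heq : ∀ t : ℝ, ∃ C : ℝ, ∀ s ≤ t, ∀ y : Y s, ‖j s y‖ ≤ C * ‖y‖)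
    -- closed balls of Y_t are closed in X_t
    (hball : ∀ t : ℝ, ∀ r : ℝ, IsClosed ((j t) '' Metric.closedBall 0 r))
    (P : ∀ t : ℝ, ℝ → Set (X t)) (N : ∀ t : ℝ, ℝ → Set (Y t))
    (hdecomp : ∀ s t : ℝ, s ≤ t → S t s '' 𝔅 s ⊆
      {x : X t | ∃ p ∈ P t s, ∃ n ∈ N t s, x = p + j t n})
    (hP : ∀ t : ℝ, ∀ ε > (0:ℝ), ∃ s0 ≤ t, ∀ s ≤ s0, ∀ p ∈ P t s, ‖p‖ ≤ ε)
    (h : ℝ → ℝ) (hmono : Monotone h)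
    (hN : ∀ t : ℝ, ∀ s ≤ t, ∀ n ∈ N t s, ‖n‖ ≤ h t) :
    (∀ t : ℝ, timeOmegaLimit S 𝔅 t ⊆ (j t) '' Metric.closedBall 0 (h t)) ∧
    PullbackBounded (timeOmegaLimit S 𝔅) := by
  have hbound : ∀ t : ℝ, timeOmegaLimit S 𝔅 t ⊆ (j t) '' Metric.closedBall 0 (h t) := by
    intro t
    refine timeOmegaLimit_subset_of_eventually_subset_cthickening S 𝔅 (hball t (h t))
      fun ε hε => ?_
    obtain ⟨s0, hs0t, hs0⟩ := hP t ε hε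
    refine ⟨s0, hs0t, fun s hs x hx => ?_⟩
    obtain ⟨p, hp, n, hn, rfl⟩ := hdecomp s t (hs.trans hs0t) hx
    exact add_mem_cthickening (hs0 s hs p hp)
      ⟨n, mem_closedBall_zero_iff.mpr (hN t s (hs.trans hs0t) n hn), rfl⟩
  exact ⟨hbound, pullbackBounded_of_subset_image_closedBall (fun t => j t) hmono hbound heq⟩

/-- Corollary 2.4: under the decomposition criterion, if moreover the
compact part `N(t,s)` lies in spaces `Y_t` compactly embedded in `X_t` (via `j t`),
with equibounded injections on `(-∞,t]`, closed balls of `Y_t` closed in `X_t`, and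
`sup_{s ≤ t} ‖N(t,s)‖_{Y_t} ≤ h(t) < ∞`, then the attractor `A(t) = ω_𝔅(t)`
satisfies `‖A(t)‖_{Y_t} ≤ h(t)` for all `t`, and `A` is pullback-bounded. -/
theorem stmt_12 {X Y : ℝ → Type*} [∀ t, NormedAddCommGroup (X t)]
    [∀ t, NormedSpace ℝ (X t)] [∀ t, CompleteSpace (X t)]
    [∀ t, NormedAddCommGroup (Y t)] [∀ t, NormedSpace ℝ (Y t)]
    (S : ∀ t s : ℝ, X s → X t) (hS : IsProcess S)
    (𝔅 : ∀ t, Set (X t)) (h𝔅 : IsAbsorber S 𝔅)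
    (j : ∀ t : ℝ, Y t →L[ℝ] X t) (hj_inj : ∀ t, Function.Injective (j t))
    -- compact embedding Y_t ⋐ X_t
    (hcpt : ∀ t : ℝ, ∀ B : Set (Y t), Bornology.IsBounded B →
      IsCompact (closure ((j t) '' B)))
    -- equibounded injections on (-∞, t]
    (heq : ∀ t : ℝ, ∃ C : ℝ, ∀ s ≤ t, ∀ y : Y s, ‖j s y‖ ≤ C * ‖y‖)
    -- closed balls of Y_t are closed in X_t
    (hball : ∀ t : ℝ, ∀ r : ℝ, IsClosed ((j t) '' Metric.closedBall 0 r))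
    (P : ∀ t : ℝ, ℝ → Set (X t)) (N : ∀ t : ℝ, ℝ → Set (Y t))
    (hdecomp : ∀ s t : ℝ, s ≤ t → S t s '' 𝔅 s ⊆
      {x : X t | ∃ p ∈ P t s, ∃ n ∈ N t s, x = p + j t n})
    (hP : ∀ t : ℝ, ∀ ε > (0:ℝ), ∃ s0 ≤ t, ∀ s ≤ s0, ∀ p ∈ P t s, ‖p‖ ≤ ε)
    (h : ℝ → ℝ) (hmono : Monotone h)
    (hN : ∀ t : ℝ, ∀ s ≤ t, ∀ n ∈ N t s, ‖n‖ ≤ h t) :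
    (∀ t : ℝ, timeOmegaLimit S 𝔅 t ⊆ (j t) '' Metric.closedBall 0 (h t)) ∧
    PullbackBounded (timeOmegaLimit S 𝔅) :=
  stmt_12_general S 𝔅 j heq hball P N hdecomp hP h hmono hN
end

section
/- Let W_k, Z_k (k ∈ ℕ) be Banach spaces with Z_k compactly embedded in W_k and κ_ε := sup_k N_ε(B_{Z_k}(1,0), W_k) < ∞ for each ε > 0. Let B_k ⊆ W_k be compact sets with sup_k ‖B_k‖_{W_k} = Q₁ < ∞, and maps U^k : B_k → B_{k−1} with U^k(B_k) = B_{k−1} admitting decompositions U^k = P^k + N^k such that ‖P^k(z¹) − P^k(z²)‖_{W_{k−1}} ≤ ϱ‖z¹ − z²‖_{W_k} with ϱ < 1/4 and ‖N^k(z¹) − N^k(z²)‖_{Z_{k−1}} ≤ Q₂‖z¹ − z²‖_{W_k} for all z¹, z² ∈ B_k. Then the fractal dimension of B₀ in W₀ satisfies dim_{W₀} B₀ ≤ (log₂ κ_{ϱ/Q₂}) / (log₂(1/(4ϱ))). -/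
/-!
Cover `B (k + 1)` by `M` balls of radius `r` and move their centres into `B (k + 1)`, doubling
the radius. Around such a centre `w`, the contraction `P` moves points of `B (k + 1)` by at most
`2ϱr`, while `N z - N w` lies in the `Z`-ball of radius `2 Q₂ r`, whose image in `W` is covered by
`κ_{ϱ/Q₂}` balls of radius `2ϱr`. Hence `B k = U (B (k + 1))` is covered by `κ_{ϱ/Q₂} M` balls of
radius `4ϱr`. Starting from a single ball at level `n` and squeezing `n` times covers `B 0` by
`κ_{ϱ/Q₂} ^ n` balls of radius `(4ϱ) ^ n · max Q₁ 1`, which gives the dimension bound.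
-/

/-- The minimal number of closed `ε`-balls of `W` needed to cover `K`. -/
noncomputable def coverNum {W : Type*} [NormedAddCommGroup W] (K : Set W) (ε : ℝ) : ℕ :=
  sInf {n : ℕ | ∃ F : Finset W, F.card = n ∧ K ⊆ ⋃ x ∈ F, Metric.closedBall x ε}

/-- The fractal (box-counting) dimension of `K ⊆ W`:
`limsup_{ε → 0⁺} log N_ε(K,W) / log(1/ε)`. -/
noncomputable def fractalDim {W : Type*} [NormedAddCommGroup W] (K : Set W) : ℝ :=
  Filter.limsup (fun ε : ℝ => Real.log (coverNum K ε) / Real.log (1 / ε))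
    (nhdsWithin 0 (Set.Ioi 0))

open Metric Filter Topology

lemma coverNum_le_card {W : Type*} [NormedAddCommGroup W] {K : Set W} {ε : ℝ}
    (F : Finset W) (h : K ⊆ ⋃ x ∈ F, closedBall x ε) : coverNum K ε ≤ F.card :=
  Nat.sInf_le ⟨F, rfl, h⟩

lemma exists_finset_near_of_subset_iUnion_closedBall {X : Type*} [PseudoMetricSpace X]
    {A : Set X} {F : Finset X} {r : ℝ} (hF : A ⊆ ⋃ x ∈ F, closedBall x r) :
    ∃ F' : Finset X, F'.card ≤ F.card ∧ ∀ z ∈ A, ∃ w ∈ F', w ∈ A ∧ dist z w ≤ 2 * r := by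
  classical
  let pick : X → X := fun x => if h : (A ∩ closedBall x r).Nonempty then h.choose else x
  refine ⟨F.image pick, Finset.card_image_le, fun z hz => ?_⟩
  obtain ⟨x, hxF, hzx⟩ := Set.mem_iUnion₂.1 (hF hz)
  have hne : (A ∩ closedBall x r).Nonempty := ⟨z, hz, hzx⟩
  have hpick : pick x ∈ A ∩ closedBall x r := by
    simpa only [pick, dif_pos hne] using hne.choose_spec
  refine ⟨pick x, Finset.mem_image_of_mem pick hxF, hpick.1, ?_⟩
  calc dist z (pick x) ≤ dist z x + dist (pick x) x := dist_triangle_right _ _ _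
    _ ≤ 2 * r := by linarith [mem_closedBall.1 hzx, mem_closedBall.1 hpick.2]

section Squeezing

variable {V Z E : Type*} [SeminormedAddCommGroup V]
  [SeminormedAddCommGroup Z] [NormedSpace ℝ Z] [SeminormedAddCommGroup E] [NormedSpace ℝ E]

lemma exists_mem_norm_sub_smul_le {j : Z →L[ℝ] E} {G : Finset E} {ε : ℝ}
    (hG : j '' closedBall 0 1 ⊆ ⋃ y ∈ G, closedBall y ε) {s : ℝ} (hs : 0 < s) {v : Z}
    (hv : ‖v‖ ≤ s) : ∃ y ∈ G, ‖j v - s • y‖ ≤ s * ε := by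
  have hv' : s⁻¹ • v ∈ closedBall (0 : Z) 1 := by
    rw [mem_closedBall_zero_iff, norm_smul, norm_inv, Real.norm_of_nonneg hs.le]
    exact inv_mul_le_one_of_le₀ hv hs.le
  obtain ⟨y, hyG, hy⟩ := Set.mem_iUnion₂.1 (hG ⟨_, hv', rfl⟩)
  refine ⟨y, hyG, ?_⟩
  have hsplit : j v - s • y = s • (j (s⁻¹ • v) - y) := by
    rw [smul_sub, map_smul, smul_inv_smul₀ hs.ne']
  rw [hsplit, norm_smul, Real.norm_of_nonneg hs.le, ← dist_eq_norm]
  exact mul_le_mul_of_nonneg_left hy hs.le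

theorem exists_cover_image_of_squeezing {j : Z →L[ℝ] E} {A : Set V} {U P : V → E} {N : V → Z}
    (hUPN : ∀ z ∈ A, U z = P z + j (N z)) {ϱ Q : ℝ} (hϱ : 0 ≤ ϱ) (hQ : 0 < Q)
    (hP : ∀ z1 ∈ A, ∀ z2 ∈ A, ‖P z1 - P z2‖ ≤ ϱ * ‖z1 - z2‖)
    (hN : ∀ z1 ∈ A, ∀ z2 ∈ A, ‖N z1 - N z2‖ ≤ Q * ‖z1 - z2‖)
    {G : Finset E} {ε : ℝ} (hG : j '' closedBall 0 1 ⊆ ⋃ y ∈ G, closedBall y ε)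
    {F : Finset V} {r : ℝ} (hr : 0 < r) (hF : A ⊆ ⋃ x ∈ F, closedBall x r) :
    ∃ F' : Finset E, F'.card ≤ F.card * G.card ∧
      U '' A ⊆ ⋃ x ∈ F', closedBall x (2 * r * (ϱ + Q * ε)) := by
  classical
  obtain ⟨F₀, hF₀, hnear⟩ := exists_finset_near_of_subset_iUnion_closedBall hF
  set s := Q * (2 * r)
  refine ⟨(F₀ ×ˢ G).image fun p => U p.1 + s • p.2, ?_, ?_⟩
  · calc _ ≤ (F₀ ×ˢ G).card := Finset.card_image_le
      _ ≤ F.card * G.card := by rw [Finset.card_product]; exact Nat.mul_le_mul_right _ hF₀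
  rintro _ ⟨z, hz, rfl⟩
  obtain ⟨w, hwF₀, hw, hzw⟩ := hnear z hz
  rw [dist_eq_norm] at hzw
  obtain ⟨y, hyG, hy⟩ := exists_mem_norm_sub_smul_le hG (by positivity : 0 < s)
    ((hN z hz w hw).trans (mul_le_mul_of_nonneg_left hzw hQ.le))
  refine Set.mem_iUnion₂.2
    ⟨U w + s • y, Finset.mem_image.2 ⟨(w, y), Finset.mem_product.2 ⟨hwF₀, hyG⟩, rfl⟩, ?_⟩
  have hsplit : U z - (U w + s • y) = (P z - P w) + (j (N z - N w) - s • y) := by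
    rw [hUPN z hz, hUPN w hw, map_sub]; abel
  rw [mem_closedBall, dist_eq_norm, hsplit]
  calc _ ≤ ‖P z - P w‖ + ‖j (N z - N w) - s • y‖ := norm_add_le _ _
    _ ≤ ϱ * (2 * r) + s * ε :=
      add_le_add ((hP z hz w hw).trans (mul_le_mul_of_nonneg_left hzw hϱ)) hy
    _ = 2 * r * (ϱ + Q * ε) := by ring

end Squeezing

lemma log_natCast_le_mul_log_of_le_pow {a c n : ℕ} (h : a ≤ c ^ n) :
    Real.log a ≤ n * Real.log c := by
  rw [← Real.log_pow, ← Nat.cast_pow]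
  rcases a.eq_zero_or_pos with h0 | hpos
  · rw [h0, Nat.cast_zero, Real.log_zero]
    exact Real.log_natCast_nonneg _
  · exact Real.log_le_log (by exact_mod_cast hpos) (by exact_mod_cast h)

section Dimension

variable {W : Type*} [NormedAddCommGroup W] {K : Set W} {c : ℕ} {θ R : ℝ}

lemma log_coverNum_le_of_forall_cover (hθ0 : 0 < θ) (hθ1 : θ < 1) (hR : 0 < R)
    (hK : ∀ n : ℕ, ∃ F : Finset W, F.card ≤ c ^ n ∧ K ⊆ ⋃ x ∈ F, closedBall x (θ ^ n * R))
    {ε : ℝ} (hε0 : 0 < ε) (hεR : ε ≤ R) :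
    Real.log (coverNum K ε) ≤ (Real.log (R / ε) / Real.log (1 / θ) + 1) * Real.log c := by
  set L := Real.log (1 / θ)
  have hL : 0 < L := Real.log_pos (one_lt_one_div hθ0 hθ1)
  set n := ⌈Real.log (R / ε) / L⌉₊
  have hn : (n : ℝ) < Real.log (R / ε) / L + 1 :=
    Nat.ceil_lt_add_one (div_nonneg (Real.log_nonneg ((one_le_div hε0).2 hεR)) hL.le)
  have hscale : θ ^ n * R ≤ ε := by
    have hnL : Real.log (R / ε) ≤ n * L := (div_le_iff₀ hL).1 (Nat.le_ceil _)
    have hlogθ : L = -Real.log θ := by simp only [L, one_div, Real.log_inv]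
    rw [← Real.log_le_log_iff (by positivity) hε0, Real.log_mul (by positivity) hR.ne',
      Real.log_pow]
    rw [Real.log_div hR.ne' hε0.ne', hlogθ] at hnL
    linarith
  obtain ⟨F, hFcard, hFcov⟩ := hK n
  have hcover : coverNum K ε ≤ c ^ n := (coverNum_le_card F (hFcov.trans
    (Set.iUnion₂_mono fun _ _ => closedBall_subset_closedBall hscale))).trans hFcard
  calc Real.log (coverNum K ε) ≤ n * Real.log c := log_natCast_le_mul_log_of_le_pow hcover
    _ ≤ _ := mul_le_mul_of_nonneg_right hn.le (Real.log_natCast_nonneg c)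

theorem fractalDim_le_of_forall_cover (hθ0 : 0 < θ) (hθ1 : θ < 1) (hR : 0 < R)
    (hK : ∀ n : ℕ, ∃ F : Finset W, F.card ≤ c ^ n ∧ K ⊆ ⋃ x ∈ F, closedBall x (θ ^ n * R)) :
    fractalDim K ≤ Real.log c / Real.log (1 / θ) := by
  set C := Real.log c
  set L := Real.log (1 / θ)
  have hL : 0 < L := Real.log_pos (one_lt_one_div hθ0 hθ1)
  set g : ℝ → ℝ := fun ε => C / L + C * (Real.log R / L + 1) / Real.log (1 / ε)
  have hsmall : Set.Ioo 0 (min 1 R) ∈ 𝓝[>] (0 : ℝ) := Ioo_mem_nhdsGT (lt_min one_pos hR)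
  have hlog_pos : ∀ ε ∈ Set.Ioo 0 (min 1 R), 0 < Real.log (1 / ε) := fun ε hε =>
    Real.log_pos (one_lt_one_div hε.1 (hε.2.trans_le (min_le_left _ _)))
  have hbound : ∀ ε ∈ Set.Ioo 0 (min 1 R),
      Real.log (coverNum K ε) / Real.log (1 / ε) ≤ g ε := by
    intro ε hε
    have hD := hlog_pos ε hε
    have hRε : Real.log (R / ε) = Real.log R + Real.log (1 / ε) := by
      rw [div_eq_mul_one_div, Real.log_mul hR.ne' (one_div_pos.2 hε.1).ne']
    rw [div_le_iff₀ hD]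
    calc _ ≤ (Real.log (R / ε) / L + 1) * C := log_coverNum_le_of_forall_cover hθ0 hθ1 hR hK
          hε.1 (hε.2.le.trans (min_le_right _ _))
      _ = g ε * Real.log (1 / ε) := by simp only [g]; rw [hRε]; field_simp; ring
  have hnonneg : ∀ ε ∈ Set.Ioo 0 (min 1 R), 0 ≤ Real.log (coverNum K ε) / Real.log (1 / ε) :=
    fun ε hε => div_nonneg (Real.log_natCast_nonneg _) (hlog_pos ε hε).le
  have hlog : Tendsto (fun ε : ℝ => Real.log (1 / ε)) (𝓝[>] 0) atTop := by
    simpa only [one_div, Real.log_inv, Function.comp_def] using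
      tendsto_neg_atBot_atTop.comp Real.tendsto_log_nhdsGT_zero
  have hg : Tendsto g (𝓝[>] 0) (𝓝 (C / L)) := by
    simpa only [g, add_zero] using tendsto_const_nhds.add (tendsto_const_nhds.div_atTop hlog)
  calc fractalDim K ≤ limsup g (𝓝[>] 0) :=
        limsup_le_limsup (mem_of_superset hsmall hbound)
          (isCoboundedUnder_le_of_eventually_le _ (mem_of_superset hsmall hnonneg))
          hg.isBoundedUnder_le
    _ = C / L := hg.limsup_eq

end Dimension

theorem stmt_16_general {W Z : ℕ → Type*}
    [∀ k, NormedAddCommGroup (W k)] [∀ k, NormedSpace ℝ (W k)]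
    [∀ k, NormedAddCommGroup (Z k)] [∀ k, NormedSpace ℝ (Z k)]
    (j : ∀ k, Z k →L[ℝ] W k)
    (κ : ℝ → ℕ)
    (hκ : ∀ ε > (0:ℝ), ∀ k, ∃ F : Finset (W k), F.card ≤ κ ε ∧
      (j k) '' Metric.closedBall 0 1 ⊆ ⋃ x ∈ F, Metric.closedBall x ε)
    (B : ∀ k, Set (W k))
    (Q1 : ℝ) (hQ1 : ∀ k, ∀ z ∈ B k, ‖z‖ ≤ Q1)
    (U P : ∀ k, W (k + 1) → W k) (N : ∀ k, W (k + 1) → Z k)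
    (hU : ∀ k, U k '' B (k + 1) = B k)
    (hUPN : ∀ k, ∀ z ∈ B (k + 1), U k z = P k z + j k (N k z))
    (ϱ Q2 : ℝ) (hϱ0 : 0 < ϱ) (hϱ : ϱ < 1 / 4) (hQ2 : 0 < Q2)
    (hP : ∀ k, ∀ z1 ∈ B (k + 1), ∀ z2 ∈ B (k + 1),
      ‖P k z1 - P k z2‖ ≤ ϱ * ‖z1 - z2‖)
    (hN : ∀ k, ∀ z1 ∈ B (k + 1), ∀ z2 ∈ B (k + 1),
      ‖N k z1 - N k z2‖ ≤ Q2 * ‖z1 - z2‖) :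
    fractalDim (B 0) ≤ Real.logb 2 (κ (ϱ / Q2)) / Real.logb 2 (1 / (4 * ϱ)) := by
  have hcover : ∀ n k, ∃ F : Finset (W k), F.card ≤ κ (ϱ / Q2) ^ n ∧
      B k ⊆ ⋃ x ∈ F, closedBall x ((4 * ϱ) ^ n * max Q1 1) := by
    intro n
    induction n with
    | zero =>
      refine fun k => ⟨{0}, by simp, fun z hz => ?_⟩
      simpa using (hQ1 k z hz).trans (le_max_left Q1 1)
    | succ n ih =>
      intro k
      obtain ⟨F, hFcard, hFcov⟩ := ih (k + 1)
      obtain ⟨G, hGcard, hGcov⟩ := hκ _ (div_pos hϱ0 hQ2) k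
      obtain ⟨F', hF'card, hF'cov⟩ := exists_cover_image_of_squeezing (hUPN k) hϱ0.le hQ2
        (hP k) (hN k) hGcov (by positivity) hFcov
      refine ⟨F', hF'card.trans ?_, ?_⟩
      · rw [pow_succ]; exact Nat.mul_le_mul hFcard hGcard
      · have hradius : 2 * ((4 * ϱ) ^ n * max Q1 1) * (ϱ + Q2 * (ϱ / Q2))
            = (4 * ϱ) ^ (n + 1) * max Q1 1 := by
          field_simp; ring
        rwa [hradius, hU k] at hF'cov
  rw [Real.logb, Real.logb, div_div_div_cancel_right₀ (Real.log_pos one_lt_two).ne']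
  exact fractalDim_le_of_forall_cover (by positivity) (by linarith)
    (lt_max_of_lt_right one_pos) fun n => hcover n 0

/-- Lemma 6.1, generalized squeezing property: Banach spaces
`Z k ⋐ W k` with uniformly bounded covering numbers `κ_ε` of the unit balls of the
`Z k` in the `W k`, compact sets `B k` uniformly bounded by `Q₁`, surjections
`U^k : B_{k+1} → B_k` decomposed as `U^k = P^k + N^k` with `P^k` a `ϱ`-contraction
(`ϱ < 1/4`) in the `W`-norms and `N^k` Lipschitz with constant `Q₂` from the
`W`-norm to the `Z`-norm. Then
`dim_{W₀} B₀ ≤ log₂ κ_{ϱ/Q₂} / log₂(1/(4ϱ))`. -/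
theorem stmt_16 {W Z : ℕ → Type*}
    [∀ k, NormedAddCommGroup (W k)] [∀ k, NormedSpace ℝ (W k)]
    [∀ k, NormedAddCommGroup (Z k)] [∀ k, NormedSpace ℝ (Z k)]
    (j : ∀ k, Z k →L[ℝ] W k)
    (hcpt : ∀ k, IsCompact (closure ((j k) '' Metric.closedBall 0 1)))
    (κ : ℝ → ℕ)
    (hκ : ∀ ε > (0:ℝ), ∀ k, ∃ F : Finset (W k), F.card ≤ κ ε ∧
      (j k) '' Metric.closedBall 0 1 ⊆ ⋃ x ∈ F, Metric.closedBall x ε)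
    (B : ∀ k, Set (W k)) (hBc : ∀ k, IsCompact (B k))
    (Q1 : ℝ) (hQ1 : ∀ k, ∀ z ∈ B k, ‖z‖ ≤ Q1)
    (U P : ∀ k, W (k + 1) → W k) (N : ∀ k, W (k + 1) → Z k)
    (hU : ∀ k, U k '' B (k + 1) = B k)
    (hUPN : ∀ k, ∀ z ∈ B (k + 1), U k z = P k z + j k (N k z))
    (ϱ Q2 : ℝ) (hϱ0 : 0 < ϱ) (hϱ : ϱ < 1 / 4) (hQ2 : 0 < Q2)
    (hP : ∀ k, ∀ z1 ∈ B (k + 1), ∀ z2 ∈ B (k + 1),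
      ‖P k z1 - P k z2‖ ≤ ϱ * ‖z1 - z2‖)
    (hN : ∀ k, ∀ z1 ∈ B (k + 1), ∀ z2 ∈ B (k + 1),
      ‖N k z1 - N k z2‖ ≤ Q2 * ‖z1 - z2‖) :
    fractalDim (B 0) ≤ Real.logb 2 (κ (ϱ / Q2)) / Real.logb 2 (1 / (4 * ϱ)) :=
  stmt_16_general j κ hκ B Q1 hQ1 U P N hU hUPN ϱ Q2 hϱ0 hϱ hQ2 hP hN
end
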